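/- With the notation of the kernel κ_{m,n} built from a measure α, for nonnegative integers d_1,...,d_N with d_1+...+d_N = m and points z_1,...,z_n with c_k := (δ_{z_1}+...+δ_{z_n})(B_k), the integral with respect to κ_{m,n}(z_1,...,z_n, ·) of the symmetrized indicator of B_1^{d_1} × ... × B_N^{d_N} (with z_1,...,z_n inserted in the first n slots) equals (1/(m)_n) · ∏_{k=1}^N (d_k)_{c_k} (α(B_k)+c_k)^{(d_k − c_k)}. -/

import Mathlib

open Finset MeasureTheory
open scoped ENNReal
open scoped Classical

/-- The measure `α + δ_{x_1} + ⋯ + δ_{x_j}` attached to a list of already-placed points. -/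
noncomputable def stepMeasure (α : Measure ℝ) (l : List ℝ) : Measure ℝ :=
  α + (l.map Measure.dirac).sum

/-- `kappaLInt α r l f` is the iterated integral
`∫⋯∫ f(l, y_1, …, y_r) (α+δ_l+δ_{y_1}+⋯+δ_{y_{r-1}})(dy_r) ⋯ (α+δ_l)(dy_1)`,
i.e. the integral of `f` against the kernel `κ_{|l|+r, |l|}(l, ·)` of the paper
(with the already-placed points `l` inserted in the first slots). -/
noncomputable def kappaLInt (α : Measure ℝ) : ℕ → List ℝ → (List ℝ → ℝ≥0∞) → ℝ≥0∞
  | 0, l, f => f l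
  | r + 1, l, f => ∫⁻ y, kappaLInt α r (l ++ [y]) f ∂(stepMeasure α l)

/-- Rising factorial `a(a+1)⋯(a+e-1)` in `ℝ≥0∞`. -/
noncomputable def risingENN (a : ℝ≥0∞) (e : ℕ) : ℝ≥0∞ :=
  ∏ j ∈ Finset.range e, (a + j)

/-- Permutations intertwining two maps are in bijection with families of fiber equivalences. -/
def permFiberEquiv {m : ℕ} {N : Type*} (f g : Fin m → N) :
    {s : Equiv.Perm (Fin m) // ∀ i, g (s i) = f i} ≃
      ((k : N) → ({i // f i = k} ≃ {i // g i = k})) where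
  toFun s k :=
    { toFun := fun x => ⟨s.1 x.1, by rw [s.2, x.2]⟩
      invFun := fun y => ⟨s.1.symm y.1, by
        have h := s.2 (s.1.symm y.1); rw [Equiv.apply_symm_apply] at h; rw [← h, y.2]⟩
      left_inv := fun x => Subtype.ext (s.1.symm_apply_apply x.1)
      right_inv := fun y => Subtype.ext (s.1.apply_symm_apply y.1) }
  invFun F := ⟨Equiv.ofFiberEquiv F, fun i => Equiv.ofFiberEquiv_map F i⟩
  left_inv s := by
    apply Subtype.ext
    apply Equiv.ext
    intro i
    simp [Equiv.ofFiberEquiv]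
  right_inv F := by
    funext k
    apply Equiv.ext
    intro x
    obtain ⟨i, hi⟩ := x
    subst hi
    apply Subtype.ext
    show ((F (f i)) ((Equiv.sigmaFiberEquiv f).symm i).snd : Fin m) = _
    rfl

section Aux

variable {N : ℕ} (B : Fin N → Set ℝ)

/-- Number of entries of `l` lying in `B k`. -/
noncomputable def cntB (l : List ℝ) (k : Fin N) : ℕ :=
  l.countP (fun x => decide (x ∈ B k))

lemma cntB_append (l : List ℝ) (y : ℝ) (k : Fin N) :
    cntB B (l ++ [y]) k = cntB B l k + if y ∈ B k then 1 else 0 := by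
  simp [cntB, List.countP_append, List.countP_cons]

lemma existsUnique_mem (hdisj : Pairwise (Function.onFun Disjoint B))
    (hcover : (⋃ k, B k) = Set.univ) (x : ℝ) : ∃! k, x ∈ B k := by
  have hx : x ∈ ⋃ k, B k := hcover ▸ Set.mem_univ x
  obtain ⟨k, hk⟩ := Set.mem_iUnion.mp hx
  refine ⟨k, hk, fun k' hk' => ?_⟩
  by_contra hne
  exact (hdisj hne).le_bot ⟨hk', hk⟩

lemma card_get_countP (p : ℝ → Prop) (l : List ℝ) :
    Fintype.card {i : Fin l.length // p (l.get i)} = l.countP (fun x => decide (p x)) := by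
  rw [Fintype.card_subtype]
  induction l with
  | nil => simp
  | cons x l ih =>
    rw [List.countP_cons, ← ih, Finset.card_filter, Finset.card_filter]
    simp only [List.length_cons, Fin.sum_univ_succ, List.get]
    simp [add_comm]
    split_ifs <;> simp_all

lemma sum_cntB (hdisj : Pairwise (Function.onFun Disjoint B))
    (hcover : (⋃ k, B k) = Set.univ) (l : List ℝ) :
    ∑ k, cntB B l k = l.length := by
  induction l with
  | nil => simp [cntB]
  | cons x l ih =>
    simp only [cntB, List.countP_cons] at *
    rw [Finset.sum_add_distrib, ih]
    obtain ⟨k₀, hk₀, huniq⟩ := existsUnique_mem B hdisj hcover x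
    have : ∀ k, (if (decide (x ∈ B k)) = true then 1 else 0)
        = if k = k₀ then 1 else 0 := by
      intro k
      simp only [decide_eq_true_eq]
      by_cases h : x ∈ B k
      · rw [if_pos h, if_pos (huniq k h)]
      · rw [if_neg h, if_neg]
        rintro rfl
        exact h hk₀
    rw [Finset.sum_congr rfl fun k _ => this k, Finset.sum_ite_eq' Finset.univ k₀]
    simp [List.length_cons]

lemma dirac_list_sum_apply (hmeas : ∀ k, MeasurableSet (B k)) (l : List ℝ) (k : Fin N) :
    ((l.map Measure.dirac).sum : Measure ℝ) (B k) = cntB B l k := by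
  induction l with
  | nil => simp [cntB]
  | cons x l ih =>
    simp only [List.map_cons, List.sum_cons, cntB, List.countP_cons] at *
    rw [Measure.add_apply, ih, Measure.dirac_apply' x (hmeas k)]
    simp only [Set.indicator_apply, decide_eq_true_eq, Pi.one_apply]
    push_cast
    by_cases h : x ∈ B k <;> simp [h, add_comm]

lemma stepMeasure_apply (α : Measure ℝ) (hmeas : ∀ k, MeasurableSet (B k))
    (l : List ℝ) (k : Fin N) :
    stepMeasure α l (B k) = α (B k) + cntB B l k := by
  rw [stepMeasure, Measure.add_apply, dirac_list_sum_apply B hmeas l k]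

end Aux

lemma risingENN_succ' (a : ℝ≥0∞) (e : ℕ) :
    risingENN a (e + 1) = a * risingENN (a + 1) e := by
  rw [risingENN, Finset.prod_range_succ']
  have h : ∀ j ∈ Finset.range e, (a + ((j : ℕ) + 1 : ℕ)) = (a + 1) + (j : ℕ) := by
    intro j _
    push_cast
    ring
  rw [Finset.prod_congr rfl h]
  simp [risingENN, mul_comm]

lemma stepIdentity (a : ℝ≥0∞) (dk c : ℕ) :
    (a + c) * (↑(dk.descFactorial (c + 1)) * risingENN (a + ↑(c + 1)) (dk - (c + 1)))
      = ↑(dk - c) * (↑(dk.descFactorial c) * risingENN (a + c) (dk - c)) := by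
  rcases lt_or_ge c dk with h | h
  · have h1 : dk - c = (dk - (c + 1)) + 1 := by omega
    rw [Nat.descFactorial_succ, h1, risingENN_succ']
    have h3 : (a + (c : ℕ)) + 1 = a + ((c + 1 : ℕ) : ℕ) := by push_cast; ring
    rw [h3]
    push_cast
    ring
  · have h2 : dk.descFactorial (c + 1) = 0 := Nat.descFactorial_eq_zero_iff_lt.mpr (by omega)
    have h3 : dk - c = 0 := by omega
    simp [h2, h3]

lemma sum_step {N : ℕ} (a : Fin N → ℝ≥0∞) (d c : Fin N → ℕ) (M j : ℕ)
    (hdm : ∑ k, d k = M) (hcj : ∑ k, c k = j) (hj : j < M) :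
    ∑ k₀, ((M.descFactorial (j + 1) : ℝ≥0∞))⁻¹ *
        (∏ k, ((d k).descFactorial (c k + if k = k₀ then 1 else 0) : ℝ≥0∞) *
          risingENN (a k + ((c k + if k = k₀ then 1 else 0 : ℕ) : ℝ≥0∞))
            (d k - (c k + if k = k₀ then 1 else 0))) *
        (a k₀ + (c k₀ : ℝ≥0∞))
      = ((M.descFactorial j : ℝ≥0∞))⁻¹ *
          ∏ k, ((d k).descFactorial (c k) : ℝ≥0∞) *
            risingENN (a k + (c k : ℝ≥0∞)) (d k - c k) := by
  set P : ℝ≥0∞ := ∏ k, ((d k).descFactorial (c k) : ℝ≥0∞) *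
      risingENN (a k + (c k : ℝ≥0∞)) (d k - c k) with hP
  have hprod : ∀ k₀ : Fin N,
      (∏ k, ((d k).descFactorial (c k + if k = k₀ then 1 else 0) : ℝ≥0∞) *
          risingENN (a k + ((c k + if k = k₀ then 1 else 0 : ℕ) : ℝ≥0∞))
            (d k - (c k + if k = k₀ then 1 else 0))) * (a k₀ + (c k₀ : ℝ≥0∞))
        = ((d k₀ - c k₀ : ℕ) : ℝ≥0∞) * P := by
    intro k₀
    rw [hP, ← Finset.mul_prod_erase Finset.univ _ (Finset.mem_univ k₀),
        ← Finset.mul_prod_erase Finset.univ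
          (fun k => ((d k).descFactorial (c k) : ℝ≥0∞) *
            risingENN (a k + (c k : ℝ≥0∞)) (d k - c k))
          (Finset.mem_univ k₀)]
    have herase : (∏ k ∈ Finset.univ.erase k₀,
          ((d k).descFactorial (c k + if k = k₀ then 1 else 0) : ℝ≥0∞) *
            risingENN (a k + ((c k + if k = k₀ then 1 else 0 : ℕ) : ℝ≥0∞))
              (d k - (c k + if k = k₀ then 1 else 0)))
        = ∏ k ∈ Finset.univ.erase k₀, ((d k).descFactorial (c k) : ℝ≥0∞) *
            risingENN (a k + (c k : ℝ≥0∞)) (d k - c k) := by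
      refine Finset.prod_congr rfl fun k hk => ?_
      rw [if_neg (Finset.ne_of_mem_erase hk), Nat.add_zero]
    rw [herase, if_pos rfl]
    rw [mul_comm _ (a k₀ + (c k₀ : ℝ≥0∞)), ← mul_assoc,
      stepIdentity (a k₀) (d k₀) (c k₀), mul_assoc]
  calc ∑ k₀, ((M.descFactorial (j + 1) : ℝ≥0∞))⁻¹ *
        (∏ k, ((d k).descFactorial (c k + if k = k₀ then 1 else 0) : ℝ≥0∞) *
          risingENN (a k + ((c k + if k = k₀ then 1 else 0 : ℕ) : ℝ≥0∞))
            (d k - (c k + if k = k₀ then 1 else 0))) *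
        (a k₀ + (c k₀ : ℝ≥0∞))
      = ∑ k₀, ((M.descFactorial (j + 1) : ℝ≥0∞))⁻¹ * (((d k₀ - c k₀ : ℕ) : ℝ≥0∞) * P) := by
        refine Finset.sum_congr rfl fun k₀ _ => ?_
        rw [mul_assoc, hprod k₀]
    _ = ((M.descFactorial (j + 1) : ℝ≥0∞))⁻¹ * ((∑ k₀, ((d k₀ - c k₀ : ℕ) : ℝ≥0∞)) * P) := by
        rw [← Finset.mul_sum, Finset.sum_mul]
    _ = ((M.descFactorial j : ℝ≥0∞))⁻¹ * P := by
        by_cases hPz : P = 0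
        · simp [hPz]
        · have hle : ∀ k, c k ≤ d k := by
            intro k
            by_contra hlt
            push_neg at hlt
            apply hPz
            rw [hP]
            refine Finset.prod_eq_zero (Finset.mem_univ k) ?_
            rw [Nat.descFactorial_eq_zero_iff_lt.mpr hlt]
            simp
          have hsum : ∑ k, (d k - c k) = M - j := by
            have h1 : ∑ k, ((d k - c k) + c k) = ∑ k, d k :=
              Finset.sum_congr rfl fun k _ => Nat.sub_add_cancel (hle k)
            rw [Finset.sum_add_distrib] at h1
            omega
          rw [show (∑ k₀, ((d k₀ - c k₀ : ℕ) : ℝ≥0∞)) = ((M - j : ℕ) : ℝ≥0∞) by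
            rw [← Nat.cast_sum, hsum]]
          rw [Nat.descFactorial_succ, Nat.cast_mul]
          have hMj : ((M - j : ℕ) : ℝ≥0∞) ≠ 0 := by
            simp only [ne_eq, Nat.cast_eq_zero]
            omega
          have hD0 : ((M.descFactorial j : ℕ) : ℝ≥0∞) ≠ 0 := by
            simp only [ne_eq, Nat.cast_eq_zero, Nat.descFactorial_eq_zero_iff_lt]
            omega
          rw [ENNReal.mul_inv (Or.inl hMj) (Or.inr hD0)]
          have hc : ((M - j : ℕ) : ℝ≥0∞)⁻¹ * ((M - j : ℕ) : ℝ≥0∞) = 1 :=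
            ENNReal.inv_mul_cancel hMj (ENNReal.natCast_ne_top _)
          calc (((M - j : ℕ) : ℝ≥0∞)⁻¹ * ((M.descFactorial j : ℝ≥0∞))⁻¹) *
                (((M - j : ℕ) : ℝ≥0∞) * P)
              = ((M.descFactorial j : ℝ≥0∞))⁻¹ *
                ((((M - j : ℕ) : ℝ≥0∞)⁻¹ * ((M - j : ℕ) : ℝ≥0∞)) * P) := by ring
            _ = ((M.descFactorial j : ℝ≥0∞))⁻¹ * P := by rw [hc, one_mul]

theorem kappa_key (α : Measure ℝ) (m N : ℕ)
    (B : Fin N → Set ℝ)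
    (hmeas : ∀ k, MeasurableSet (B k))
    (hdisj : Pairwise (Function.onFun Disjoint B))
    (hcover : (⋃ k, B k) = Set.univ)
    (d : Fin N → ℕ) (hd : ∑ k, d k = m)
    (β : Fin m → Fin N)
    (hβcard : ∀ k, Fintype.card {i : Fin m // β i = k} = d k) :
    ∀ (r : ℕ) (l : List ℝ), l.length + r = m →
    kappaLInt α r l
      (fun ys => if h : ys.length = m then
          ((Nat.factorial m : ℝ≥0∞))⁻¹ *
            ∑ s : Equiv.Perm (Fin m),
              (if ∀ i : Fin m, ys.get (Fin.cast h.symm (s i)) ∈ B (β i) then (1 : ℝ≥0∞)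
                else 0)
        else 0)
      = ((m.descFactorial l.length : ℝ≥0∞))⁻¹ *
        ∏ k, ((d k).descFactorial (cntB B l k) : ℝ≥0∞) *
          risingENN (α (B k) + (cntB B l k : ℝ≥0∞)) (d k - cntB B l k) := by
  obtain ⟨blk, hblk1, hblk2⟩ :
      ∃ blk : ℝ → Fin N, (∀ x, x ∈ B (blk x)) ∧ ∀ x k, x ∈ B k → k = blk x := by
    choose blk h1 h2 using fun x => existsUnique_mem B hdisj hcover x
    exact ⟨blk, h1, h2⟩
  have hiff : ∀ (k : Fin N) (x : ℝ), x ∈ B k ↔ blk x = k :=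
    fun k x => ⟨fun h => (hblk2 x k h).symm, fun h => h ▸ hblk1 x⟩
  intro r
  induction r with
  | zero =>
    intro l hlen0
    have hlen : l.length = m := by omega
    simp only [kappaLInt]
    rw [dif_pos hlen]
    set g : Fin m → Fin N := fun p => blk (l.get (Fin.cast hlen.symm p)) with hg
    have hcard_g : ∀ k, Fintype.card {p : Fin m // g p = k} = cntB B l k := by
      intro k
      rw [cntB, ← card_get_countP (fun x => x ∈ B k) l]
      refine Fintype.card_congr (Equiv.subtypeEquiv (finCongr hlen.symm) ?_)
      intro p
      exact (hiff k (l.get (Fin.cast hlen.symm p))).symm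
    have hcond : ∀ s : Equiv.Perm (Fin m),
        (∀ i, l.get (Fin.cast hlen.symm (s i)) ∈ B (β i)) ↔ (∀ i, g (s i) = β i) :=
      fun s => forall_congr' fun i => hiff (β i) _
    have hsum : (∑ s : Equiv.Perm (Fin m),
          if ∀ i : Fin m, l.get (Fin.cast hlen.symm (s i)) ∈ B (β i) then (1 : ℝ≥0∞) else 0)
        = (Fintype.card {s : Equiv.Perm (Fin m) // ∀ i, g (s i) = β i} : ℝ≥0∞) := by
      rw [Finset.sum_congr rfl fun s _ => if_congr (hcond s) rfl rfl, Finset.sum_boole,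
        Fintype.card_subtype]
    have hD : ((m.descFactorial l.length : ℕ) : ℝ≥0∞) = (m.factorial : ℝ≥0∞) := by
      rw [hlen, Nat.descFactorial_self]
    rw [hD, hsum]
    congr 1
    by_cases hall : ∀ k, cntB B l k = d k
    · have hcards : Fintype.card {s : Equiv.Perm (Fin m) // ∀ i, g (s i) = β i}
          = ∏ k, (d k).factorial := by
        rw [Fintype.card_congr (permFiberEquiv β g), Fintype.card_pi]
        refine Finset.prod_congr rfl fun k _ => ?_
        have e : {i : Fin m // β i = k} ≃ {p : Fin m // g p = k} :=
          Fintype.equivOfCardEq (by rw [hβcard, hcard_g, hall])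
        rw [Fintype.card_equiv e, hβcard]
      rw [hcards, Nat.cast_prod]
      refine Finset.prod_congr rfl fun k _ => ?_
      rw [hall k, Nat.descFactorial_self, Nat.sub_self]
      simp [risingENN]
    · have hc0 : Fintype.card {s : Equiv.Perm (Fin m) // ∀ i, g (s i) = β i} = 0 := by
        rw [Fintype.card_eq_zero_iff]
        refine ⟨fun s => hall fun k => ?_⟩
        have F := (permFiberEquiv β g) s
        have hck := Fintype.card_congr (F k)
        rw [hβcard k, hcard_g k] at hck
        exact hck.symm
      rw [hc0, Nat.cast_zero]
      have hsc : ∑ k, cntB B l k = m := by rw [sum_cntB B hdisj hcover l, hlen]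
      have hex : ∃ k, d k < cntB B l k := by
        by_contra hno
        push_neg at hno
        obtain ⟨k₀, hk₀⟩ := not_forall.mp hall
        have hlt : cntB B l k₀ < d k₀ := lt_of_le_of_ne (hno k₀) hk₀
        have := Finset.sum_lt_sum (fun k (_ : k ∈ Finset.univ) => hno k)
          ⟨k₀, Finset.mem_univ k₀, hlt⟩
        omega
      obtain ⟨k₁, hk₁⟩ := hex
      symm
      refine Finset.prod_eq_zero (Finset.mem_univ k₁) ?_
      rw [Nat.descFactorial_eq_zero_iff_lt.mpr hk₁]
      simp
  | succ r IH =>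
    intro l hlen
    have hjlt : l.length < m := by omega
    rw [kappaLInt]
    have hstep : ∀ y : ℝ, kappaLInt α r (l ++ [y])
        (fun ys => if h : ys.length = m then
            ((Nat.factorial m : ℝ≥0∞))⁻¹ *
              ∑ s : Equiv.Perm (Fin m),
                (if ∀ i : Fin m, ys.get (Fin.cast h.symm (s i)) ∈ B (β i) then (1 : ℝ≥0∞)
                  else 0)
          else 0)
        = ∑ k₀, (B k₀).indicator (fun _ =>
            ((m.descFactorial (l.length + 1) : ℝ≥0∞))⁻¹ *
            ∏ k, ((d k).descFactorial (cntB B l k + if k = k₀ then 1 else 0) : ℝ≥0∞) *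
              risingENN (α (B k) + ((cntB B l k + if k = k₀ then 1 else 0 : ℕ) : ℝ≥0∞))
                (d k - (cntB B l k + if k = k₀ then 1 else 0))) y := by
      intro y
      rw [IH (l ++ [y]) (by simp only [List.length_append, List.length_singleton]; omega)]
      obtain ⟨k₀, hk₀mem, hk₀uniq⟩ := existsUnique_mem B hdisj hcover y
      have hmem : ∀ k, y ∈ B k ↔ k = k₀ := fun k => ⟨hk₀uniq k, fun h => h ▸ hk₀mem⟩
      have hcnt : ∀ k, cntB B (l ++ [y]) k = cntB B l k + if k = k₀ then 1 else 0 := by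
        intro k
        rw [cntB_append]
        congr 1
        simp only [hmem k]
      have hR : ∀ k' : Fin N, (B k').indicator (fun _ =>
            ((m.descFactorial (l.length + 1) : ℝ≥0∞))⁻¹ *
            ∏ k, ((d k).descFactorial (cntB B l k + if k = k' then 1 else 0) : ℝ≥0∞) *
              risingENN (α (B k) + ((cntB B l k + if k = k' then 1 else 0 : ℕ) : ℝ≥0∞))
                (d k - (cntB B l k + if k = k' then 1 else 0))) y
          = if k' = k₀ then ((m.descFactorial (l.length + 1) : ℝ≥0∞))⁻¹ *
            ∏ k, ((d k).descFactorial (cntB B l k + if k = k' then 1 else 0) : ℝ≥0∞) *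
              risingENN (α (B k) + ((cntB B l k + if k = k' then 1 else 0 : ℕ) : ℝ≥0∞))
                (d k - (cntB B l k + if k = k' then 1 else 0)) else 0 := by
        intro k'
        rw [Set.indicator_apply]
        simp only [hmem k']
      rw [Finset.sum_congr rfl fun k' _ => hR k', Finset.sum_ite_eq' Finset.univ k₀,
        if_pos (Finset.mem_univ k₀)]
      have hlen2 : (l ++ [y]).length = l.length + 1 := by simp
      rw [hlen2]
      exact congrArg _ (Finset.prod_congr rfl fun k _ => by rw [hcnt k])
    rw [lintegral_congr hstep,
      lintegral_finset_sum _ (fun k _ => measurable_const.indicator (hmeas k))]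
    rw [Finset.sum_congr rfl fun k₀ _ => by
      rw [lintegral_indicator_const (hmeas k₀), stepMeasure_apply B α hmeas l k₀]]
    exact sum_step (fun k => α (B k)) d (fun k => cntB B l k) m l.length hd
      (sum_cntB B hdisj hcover l) hjlt

/-- the κ_{m,n}-integral of the symmetrized indicator of
`B_1^{d_1} × ⋯ × B_N^{d_N}` (with `z_1,…,z_n` inserted in the first `n` slots) equals
`(1/(m)_n) ∏_k (d_k)_{c_k} (α(B_k)+c_k)^{(d_k-c_k)}` with `c_k = #{j : z_j ∈ B_k}`.
The rectangle is encoded by a monotone block-assignment `β : Fin m → Fin N` whose fibre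
over `k` has `d_k` elements. -/
theorem kappa_integral_symmetrized_indicator (α : Measure ℝ) (n m N : ℕ) (hnm : n ≤ m)
    (B : Fin N → Set ℝ)
    (hmeas : ∀ k, MeasurableSet (B k))
    (hdisj : Pairwise (Function.onFun Disjoint B))
    (hcover : (⋃ k, B k) = Set.univ)
    (hfin : ∀ k, α (B k) < ⊤)
    (d : Fin N → ℕ) (hd : ∑ k, d k = m)
    (β : Fin m → Fin N) (hβmono : Monotone β)
    (hβ : ∀ k, ({i : Fin m | β i = k}.ncard) = d k)
    (z : Fin n → ℝ) :
    kappaLInt α (m - n) (List.ofFn z)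
      (fun ys => if h : ys.length = m then
          ((Nat.factorial m : ℝ≥0∞))⁻¹ *
            ∑ s : Equiv.Perm (Fin m),
              (if ∀ i : Fin m, ys.get (Fin.cast h.symm (s i)) ∈ B (β i) then (1 : ℝ≥0∞)
                else 0)
        else 0)
      = ((m.descFactorial n : ℝ≥0∞))⁻¹ *
        ∏ k, ((d k).descFactorial ({j : Fin n | z j ∈ B k}.ncard) : ℝ≥0∞) *
          risingENN (α (B k) + ({j : Fin n | z j ∈ B k}.ncard : ℝ≥0∞))
            (d k - {j : Fin n | z j ∈ B k}.ncard) := by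
  have hβcard : ∀ k, Fintype.card {i : Fin m // β i = k} = d k := by
    intro k
    rw [← hβ k]
    rw [Set.ncard_eq_toFinset_card', Set.toFinset_setOf, Fintype.card_subtype]
  have hcnt : ∀ k, {j : Fin n | z j ∈ B k}.ncard = cntB B (List.ofFn z) k := by
    intro k
    rw [Set.ncard_eq_toFinset_card', Set.toFinset_setOf, ← Fintype.card_subtype]
    rw [cntB, ← card_get_countP]
    refine Fintype.card_congr (Equiv.subtypeEquiv (finCongr (List.length_ofFn (f := z)).symm) ?_)
    intro i
    rw [List.get_ofFn]
    exact Iff.rfl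
  have hlen : (List.ofFn z).length + (m - n) = m := by
    simp [List.length_ofFn]
    omega
  have := kappa_key α m N B hmeas hdisj hcover d hd β hβcard (m - n) (List.ofFn z) hlen
  rw [this]
  simp only [List.length_ofFn, hcnt]
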